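/- arXiv:1607.00709 — 3 statements merged into one kernel-verified Lean document; each statement's English description precedes it below -/
import Mathlib

section
/- For every real t > 1, one has 0 ≤ log(t/2) + 1/(8t²) − log|1/4 + it/2| ≤ 1/(64·t⁴), where |1/4 + it/2| denotes the modulus of the complex number 1/4 + it/2. -/
open Real Complex

/-
With `x = 1 / (4 t²)` one has `|1/4 + it/2| = (t/2) √(1 + x)`, so the quantity in question equals
`(x - log (1 + x)) / 2`. The two bounds are then `log (1 + x) ≤ x` and `x - x² / 2 ≤ log (1 + x)`
for `x ≥ 0`, the latter being a weakening of `2x / (x + 2) ≤ log (1 + x)`.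
-/

lemma Real.sub_sq_div_two_le_log_one_add {x : ℝ} (hx : 0 ≤ x) : x - x ^ 2 / 2 ≤ log (1 + x) := by
  refine le_trans ?_ (le_log_one_add_of_nonneg hx)
  rw [le_div_iff₀ (by linarith)]
  nlinarith [sq_nonneg x, mul_nonneg hx (sq_nonneg x)]

lemma Real.log_one_add_le_self {x : ℝ} (hx : -1 < x) : log (1 + x) ≤ x := by
  linarith [log_le_sub_one_of_pos (show 0 < 1 + x by linarith)]

lemma Complex.log_norm_add_mul_I {a b : ℝ} (hb : b ≠ 0) :
    Real.log ‖(a + b * I : ℂ)‖ = Real.log b + Real.log (1 + (a / b) ^ 2) / 2 := by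
  have hsq : a ^ 2 + b ^ 2 = b ^ 2 * (1 + (a / b) ^ 2) := by field_simp; ring
  rw [norm_add_mul_I, hsq, Real.log_sqrt (by positivity),
    Real.log_mul (by positivity) (by positivity), Real.log_pow]
  push_cast
  ring

/-- For every real `t > 1`,
`0 ≤ log(t/2) + 1/(8t²) − log|1/4 + it/2| ≤ 1/(64 t⁴)`. -/
theorem stmt_2 (t : ℝ) (ht : 1 < t) :
    0 ≤ Real.log (t/2) + 1/(8*t^2) - Real.log (‖(1/4 + t/2 * Complex.I : ℂ)‖) ∧
    Real.log (t/2) + 1/(8*t^2) - Real.log (‖(1/4 + t/2 * Complex.I : ℂ)‖)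
      ≤ 1/(64*t^4) := by
  have ht0 : t ≠ 0 := by positivity
  have hnorm := log_norm_add_mul_I (a := 1 / 4) (b := t / 2) (by positivity)
  push_cast at hnorm
  set x : ℝ := (1 / 4 / (t / 2)) ^ 2 with hx
  have hx0 : 0 ≤ x := sq_nonneg _
  have h8 : 1 / (8 * t ^ 2) = x / 2 := by rw [hx]; field_simp; ring
  have h64 : 1 / (64 * t ^ 4) = x ^ 2 / 4 := by rw [hx]; field_simp; ring
  rw [hnorm, h8, h64]
  constructor
  · linarith [log_one_add_le_self (show -1 < x by linarith)]
  · linarith [sub_sq_div_two_le_log_one_add hx0]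
end

section
/- Let t > 0 be real, set s = 1/2 + it and s* = 1/2 − it, and suppose |s| > 1. Let d_m denote the m-th Taylor coefficient at z = 0 of g(z) := e^{s* z³/3} · f_{s*}(z). Then for every nonnegative integer m, |d_m| ≤ |s|^{m/4} · exp( 1/(2|s|^{1/4}) + 1/(4|s|^{1/2}) + 1/(4(1 − |s|^{−1/4})) ). -/
open Real Complex

/-- `f_s(z) = e^{(s−1/2)(z − z²/2)}/(1+z)^s`, holomorphic on the unit disc,
with `(1+z)^s` the principal branch. -/
noncomputable def fRS (s : ℂ) (z : ℂ) : ℂ :=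
  Complex.exp ((s - 1/2) * (z - z^2/2)) / (1+z)^s

/-- `g(z) = e^{s* z³/3} f_{s*}(z)` for `s* = 1/2 − it`. -/
noncomputable def gRS (t : ℝ) (z : ℂ) : ℂ :=
  Complex.exp ((1/2 - t * Complex.I) * z^3/3) * fRS (1/2 - t * Complex.I) z

/-!
Writing `(1+z)^s = exp (s log (1+z))`, the function `e^{s z³/3} f_s(z)` equals
`exp (-s (log (1+z) - (z - z²/2 + z³/3)) - (z - z²/2)/2)`. The remainder of the cubic Taylor
polynomial of `log (1+z)` is at most `|z|⁴/(4(1-|z|))`, so on the circle `|z| = r < 1` the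
function is bounded by `exp (|s| r⁴/(4(1-r)) + r/2 + r²/4)`. Cauchy's estimate on that circle
with `r = |s|^{-1/4}` turns `|s| r⁴` into `1` and `r^{-m}` into `|s|^{m/4}`.
-/

open Metric

noncomputable def gOf (s : ℂ) (z : ℂ) : ℂ :=
  Complex.exp (s * z^3/3) * fRS s z

lemma Complex.logTaylor_four (z : ℂ) : logTaylor 4 z = z - z^2/2 + z^3/3 := by
  simp [logTaylor, Finset.sum_range_succ]
  ring

lemma gOf_eq (s : ℂ) {z : ℂ} (hz : 1 + z ∈ slitPlane) :
    gOf s z = Complex.exp (-(s * (log (1 + z) - logTaylor 4 z)) - (z - z^2/2) / 2) := by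
  rw [gOf, fRS, cpow_def_of_ne_zero (slitPlane_ne_zero hz), ← Complex.exp_sub,
    ← Complex.exp_add, logTaylor_four]
  ring_nf

lemma norm_gOf_le (s : ℂ) {z : ℂ} (hz : ‖z‖ < 1) :
    ‖gOf s z‖
      ≤ Real.exp (‖s‖ * (‖z‖^4 / (4 * (1 - ‖z‖))) + (‖z‖ + ‖z‖^2/2) / 2) := by
  rw [gOf_eq s (mem_slitPlane_of_norm_lt_one hz), norm_exp, Real.exp_le_exp]
  have hlog : ‖log (1 + z) - logTaylor 4 z‖ ≤ ‖z‖^4 / (4 * (1 - ‖z‖)) := by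
    convert norm_log_sub_logTaylor_le 3 hz using 1
    have : 1 - ‖z‖ ≠ 0 := by linarith
    push_cast
    field_simp
    ring
  have hquad : ‖(z - z^2/2) / 2‖ ≤ (‖z‖ + ‖z‖^2/2) / 2 := by
    rw [norm_div, Complex.norm_ofNat]
    gcongr
    calc ‖z - z^2/2‖ ≤ ‖z‖ + ‖z^2/2‖ := norm_sub_le _ _
      _ = ‖z‖ + ‖z‖^2/2 := by rw [norm_div, norm_pow, Complex.norm_ofNat]
  calc (-(s * (log (1 + z) - logTaylor 4 z)) - (z - z^2/2) / 2).re
      ≤ ‖-(s * (log (1 + z) - logTaylor 4 z)) - (z - z^2/2) / 2‖ := re_le_norm _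
    _ ≤ ‖s‖ * ‖log (1 + z) - logTaylor 4 z‖ + ‖(z - z^2/2) / 2‖ := by
        grw [norm_sub_le, norm_neg, norm_mul]
    _ ≤ _ := by gcongr

lemma differentiableOn_gOf (s : ℂ) :
    DifferentiableOn ℂ (gOf s) (ball 0 1) := by
  intro z hz
  rw [mem_ball_zero_iff] at hz
  have hsp := mem_slitPlane_of_norm_lt_one hz
  refine DifferentiableAt.differentiableWithinAt ?_
  unfold gOf fRS
  refine (by fun_prop : DifferentiableAt ℂ _ z).mul (DifferentiableAt.div (by fun_prop)
    ((differentiableAt_id.const_add 1).cpow (differentiableAt_const s) hsp) ?_)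
  rw [cpow_def_of_ne_zero (slitPlane_ne_zero hsp)]
  exact Complex.exp_ne_zero _

lemma norm_iteratedDeriv_gOf_div_factorial_le (s : ℂ) (m : ℕ) {r : ℝ} (hr0 : 0 < r)
    (hr1 : r < 1) :
    ‖iteratedDeriv m (gOf s) 0 / (m.factorial : ℂ)‖
      ≤ Real.exp (‖s‖ * (r^4 / (4 * (1 - r))) + (r + r^2/2) / 2) / r^m := by
  have hcauchy := norm_iteratedDeriv_le_of_forall_mem_sphere_norm_le m hr0
    ((differentiableOn_gOf s).diffContOnCl_ball (closedBall_subset_ball hr1))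
    (fun z hz ↦ by
      have hzr : ‖z‖ = r := mem_sphere_zero_iff_norm.1 hz
      simpa only [hzr] using norm_gOf_le s (hzr.trans_lt hr1))
  rw [norm_div, Complex.norm_natCast, div_le_iff₀ (by positivity)]
  exact hcauchy.trans_eq (by ring)

lemma norm_iteratedDeriv_gOf_div_factorial_le_rpow (s : ℂ) (hs : 1 < ‖s‖) (m : ℕ) :
    ‖iteratedDeriv m (gOf s) 0 / (m.factorial : ℂ)‖
      ≤ ‖s‖ ^ ((m:ℝ)/4) * Real.exp (1/(2 * ‖s‖ ^ ((1:ℝ)/4)) + 1/(4 * ‖s‖ ^ ((1:ℝ)/2))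
        + 1/(4 * (1 - ‖s‖ ^ (-(1:ℝ)/4)))) := by
  set q := ‖s‖ ^ ((1:ℝ)/4) with hq_def
  have hq1 : 1 < q := Real.one_lt_rpow hs (by norm_num)
  have hqpow (x : ℝ) : ‖s‖ ^ (x / 4) = q ^ x := by
    rw [hq_def, ← Real.rpow_mul (norm_nonneg s)]; ring_nf
  have hs4 : ‖s‖ = q ^ 4 := by rw [← Real.rpow_natCast, ← hqpow]; norm_num
  have hs2 : ‖s‖ ^ ((1:ℝ)/2) = q ^ 2 := by rw [← Real.rpow_natCast, ← hqpow]; norm_num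
  have hsm : ‖s‖ ^ ((m:ℝ)/4) = q ^ m := by rw [hqpow, Real.rpow_natCast]
  have hr : ‖s‖ ^ (-(1:ℝ)/4) = q⁻¹ := by rw [hqpow, Real.rpow_neg_one]
  refine (norm_iteratedDeriv_gOf_div_factorial_le s m (by positivity)
    (inv_lt_one_of_one_lt₀ hq1)).trans_eq ?_
  rw [hs2, hsm, hr, hs4]
  have hq0 : q ≠ 0 := by positivity
  have hq1' : 1 - q⁻¹ ≠ 0 := sub_ne_zero.2 (inv_lt_one_of_one_lt₀ hq1).ne'
  rw [div_eq_mul_inv, mul_comm]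
  simp only [inv_pow, inv_inv]
  congr 2
  field_simp
  ring

theorem stmt_12_general (t : ℝ)
    (hs : 1 < ‖(1/2 + t * Complex.I : ℂ)‖) (m : ℕ) :
    ‖iteratedDeriv m (gRS t) 0 / (Nat.factorial m : ℂ)‖
      ≤ ‖(1/2 + t * Complex.I : ℂ)‖ ^ ((m:ℝ)/4)
        * Real.exp (1/(2 * ‖(1/2 + t * Complex.I : ℂ)‖ ^ ((1:ℝ)/4))
            + 1/(4 * ‖(1/2 + t * Complex.I : ℂ)‖ ^ ((1:ℝ)/2))
            + 1/(4 * (1 - ‖(1/2 + t * Complex.I : ℂ)‖ ^ (-(1:ℝ)/4)))) := by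
  have hconj : ‖(1/2 - t * Complex.I : ℂ)‖ = ‖(1/2 + t * Complex.I : ℂ)‖ := by
    rw [← Complex.norm_conj]
    congr 1
    apply Complex.ext <;> simp
  have h := norm_iteratedDeriv_gOf_div_factorial_le_rpow (1/2 - t * Complex.I)
    (hconj ▸ hs) m
  rw [hconj] at h
  exact h

/-- Let `t > 0`, `s = 1/2 + it`, `s* = 1/2 − it`, `|s| > 1`, and let
`d_m = g^{(m)}(0)/m!` be the Taylor coefficients of `g(z) = e^{s* z³/3} f_{s*}(z)`
at `0`. Then for every `m ≥ 0`,
`|d_m| ≤ |s|^{m/4} exp(1/(2|s|^{1/4}) + 1/(4|s|^{1/2}) + 1/(4(1 − |s|^{−1/4})))`. -/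
theorem stmt_12 (t : ℝ) (ht : 0 < t)
    (hs : 1 < ‖(1/2 + t * Complex.I : ℂ)‖) (m : ℕ) :
    ‖iteratedDeriv m (gRS t) 0 / (Nat.factorial m : ℂ)‖
      ≤ ‖(1/2 + t * Complex.I : ℂ)‖ ^ ((m:ℝ)/4)
        * Real.exp (1/(2 * ‖(1/2 + t * Complex.I : ℂ)‖ ^ ((1:ℝ)/4))
            + 1/(4 * ‖(1/2 + t * Complex.I : ℂ)‖ ^ ((1:ℝ)/2))
            + 1/(4 * (1 - ‖(1/2 + t * Complex.I : ℂ)‖ ^ (-(1:ℝ)/4)))) :=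
  stmt_12_general t hs m
end

section
/- Let t > 2π be real, N = ⌊√(t/2π)⌋, let v₀ ≤ N + 1 be a positive integer, u₀ > 1 real, and define K_r = ⌈v_r/u₀⌉ and v_{r+1} = v_r + K_r for 0 ≤ r < R, where R is the largest integer with v_R < N + 1; set K_R = min{⌈v_R/u₀⌉, N + 1 − v_R}. With s* = 1/2 − it, a_r = t/(2π v_r), b_r = −t/(4π v_r²), c_r(j) = (K_r/v_r)^j · f_{s*}^{(j)}(0)/j!, and any nonnegative integer J, define ε_J(t) := Σ_{r=0}^R (e^{i t·log v_r}/√v_r) · Σ_{j>J} c_r(j)·F(K_r, j; a_r, b_r). Then |ε_J(t)| ≤ c_max(J, t) · M_max(t), where c_max(J, t) := max over 0 ≤ r ≤ R of Σ_{j>J} ((K_r−1)/K_r)^j · |c_r(j)| and M_max(t) := Σ_{r=0}^R F_max(K_r; a_r, b_r)/√v_r. -/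
open Real Complex

/-- The normalized quadratic exponential sum
`F(K, j; a, b) = K^{−j} Σ_{k=0}^{K−1} k^j e^{2πiak + 2πibk²}`
(with `k^j = 1` when `k = j = 0`). -/
noncomputable def quadSum (K : ℕ) (j : ℕ) (a b : ℝ) : ℂ :=
  (1/(K:ℂ)^j) * ∑ k ∈ Finset.range K,
    (k:ℂ)^j * Complex.exp (2*(π:ℂ)*Complex.I*((a*k : ℝ):ℂ) + 2*(π:ℂ)*Complex.I*((b*k^2 : ℝ):ℂ))

/-- `F_max(K; a, b) = max_{0 ≤ Δ < K} |Σ_{k=Δ}^{K−1} e^{2πiak + 2πibk²}|`. -/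
noncomputable def quadSumMax (K : ℕ) (a b : ℝ) : ℝ :=
  ⨆ Δ ∈ Finset.range K, ‖∑ k ∈ Finset.Ico Δ K,
    Complex.exp (2*(π:ℂ)*Complex.I*((a*k : ℝ):ℂ) + 2*(π:ℂ)*Complex.I*((b*k^2 : ℝ):ℂ))‖

/-- The Taylor coefficients `c_r(j) = (K_r/v_r)^j f_{s*}^{(j)}(0)/j!` with `s* = 1/2 − it`. -/
noncomputable def cRS (t : ℝ) (K v : ℕ) (j : ℕ) : ℂ :=
  ((K:ℂ)/(v:ℂ))^j * iteratedDeriv j (fRS (1/2 - t * Complex.I)) 0 / (Nat.factorial j : ℂ)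

/-!
Abel summation against the tails `∑_{k ≥ Δ} e^{2πi(ak + bk²)}` bounds `|F(K, j; a, b)|` by
`((K − 1)/K)^j F_max(K; a, b)`, because the weights `k^j` increase on `0 ≤ k < K` up to `(K − 1)^j`.
Since `u₀ ≥ 1` gives `K_r ≤ v_r`, the majorant `((K_r − 1)/K_r)^j |c_r(j)|` is the `j`-th Taylor
coefficient of `f_{s*}` at `0` times `((K_r − 1)/v_r)^j` with `(K_r − 1)/v_r < 1`; as `f_{s*}` is
holomorphic on the unit disc, these series converge absolutely, so the bound sums termwise over `j`.
The phases `e^{it log v_r}` have modulus one, and each `c_r`-series is at most `c_max(J, t)`.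
-/

open Finset

lemma le_ciSup₂_of_mem {ι α : Type*} [ConditionallyCompleteLattice α] {s : Finset ι}
    (f : ι → α) {i : ι} (hi : i ∈ s) : f i ≤ ⨆ j ∈ s, f j := by
  have : Nonempty α := ⟨f i⟩
  refine le_ciSup₂ (f := fun j (_ : j ∈ s) => f j) ?_ i hi
  refine (s.finite_toSet.image f).bddAbove.mono ?_
  rintro _ ⟨_, ⟨j, rfl⟩, ⟨hj, rfl⟩⟩
  exact ⟨j, hj, rfl⟩

def increments (w : ℕ → ℝ) : ℕ → ℝ
  | 0 => w 0
  | n + 1 => w (n + 1) - w n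

lemma sum_range_succ_increments (w : ℕ → ℝ) (k : ℕ) :
    ∑ Δ ∈ range (k + 1), increments w Δ = w k := by
  rw [sum_range_succ']
  change ∑ i ∈ range k, (w (i + 1) - w i) + w 0 = w k
  rw [sum_range_sub]
  ring

lemma increments_nonneg {w : ℕ → ℝ} (hw : Monotone w) (hw0 : 0 ≤ w 0) (n : ℕ) :
    0 ≤ increments w n := by
  cases n with
  | zero => exact hw0
  | succ n => exact sub_nonneg.mpr (hw n.le_succ)

section Abel

variable {E : Type*} [SeminormedAddCommGroup E] [NormedSpace ℝ E]

theorem sum_range_smul_eq_sum_increments_smul_tail (w : ℕ → ℝ) (e : ℕ → E) (n : ℕ) :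
    ∑ k ∈ range n, w k • e k = ∑ Δ ∈ range n, increments w Δ • ∑ k ∈ Ico Δ n, e k := by
  simp only [smul_sum]
  rw [range_eq_Ico, sum_Ico_Ico_comm]
  simp only [← sum_smul, ← range_eq_Ico, sum_range_succ_increments]

theorem norm_sum_range_smul_le_of_monotone {w : ℕ → ℝ} (hw : Monotone w) (hw0 : 0 ≤ w 0)
    (e : ℕ → E) (n : ℕ) {M : ℝ} (hM : ∀ Δ < n + 1, ‖∑ k ∈ Ico Δ (n + 1), e k‖ ≤ M) :
    ‖∑ k ∈ range (n + 1), w k • e k‖ ≤ w n * M := by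
  rw [sum_range_smul_eq_sum_increments_smul_tail, ← sum_range_succ_increments w n, sum_mul]
  refine (norm_sum_le _ _).trans (sum_le_sum fun Δ hΔ => ?_)
  rw [norm_smul, Real.norm_of_nonneg (increments_nonneg hw hw0 Δ)]
  exact mul_le_mul_of_nonneg_left (hM Δ (mem_range.mp hΔ)) (increments_nonneg hw hw0 Δ)

end Abel

lemma le_quadSumMax (K : ℕ) (a b : ℝ) {Δ : ℕ} (hΔ : Δ < K) :
    ‖∑ k ∈ Ico Δ K,
      Complex.exp (2*(π:ℂ)*Complex.I*((a*k : ℝ):ℂ) + 2*(π:ℂ)*Complex.I*((b*k^2 : ℝ):ℂ))‖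
    ≤ quadSumMax K a b :=
  le_ciSup₂_of_mem (fun Δ => ‖∑ k ∈ Ico Δ K,
      Complex.exp (2*(π:ℂ)*Complex.I*((a*k : ℝ):ℂ) + 2*(π:ℂ)*Complex.I*((b*k^2 : ℝ):ℂ))‖)
    (mem_range.mpr hΔ)

lemma quadSumMax_nonneg (K : ℕ) (a b : ℝ) : 0 ≤ quadSumMax K a b :=
  Real.iSup_nonneg fun _ => Real.iSup_nonneg fun _ => norm_nonneg _

theorem norm_quadSum_le (K j : ℕ) (a b : ℝ) :
    ‖quadSum K j a b‖ ≤ (((K : ℝ) - 1) / K) ^ j * quadSumMax K a b := by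
  obtain _ | n := K
  · simpa [quadSum] using mul_nonneg (pow_nonneg le_rfl j) (quadSumMax_nonneg 0 a b)
  have hpow : ∀ k : ℕ, (k : ℂ) ^ j = ((k : ℝ) ^ j : ℝ) := by simp
  have habel := norm_sum_range_smul_le_of_monotone (w := fun k : ℕ => (k : ℝ) ^ j)
    (fun k l hkl => pow_le_pow_left₀ k.cast_nonneg (by exact_mod_cast hkl) j) (by positivity)
    (fun k : ℕ => Complex.exp (2*(π:ℂ)*Complex.I*((a*k : ℝ):ℂ) + 2*(π:ℂ)*Complex.I*((b*k^2 : ℝ):ℂ)))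
    n (fun Δ hΔ => le_quadSumMax _ a b hΔ)
  simp only [Complex.real_smul, ← hpow] at habel
  rw [quadSum, norm_mul, norm_div, norm_one, norm_pow, Complex.norm_natCast, div_pow,
    Nat.cast_succ, add_sub_cancel_right]
  calc 1 / ((n : ℝ) + 1) ^ j * ‖_‖ ≤ 1 / ((n : ℝ) + 1) ^ j * ((n : ℝ) ^ j * quadSumMax _ a b) :=
        mul_le_mul_of_nonneg_left (by exact_mod_cast habel) (by positivity)
    _ = _ := by ring

lemma differentiableOn_fRS (s : ℂ) : DifferentiableOn ℂ (fRS s) (Metric.ball 0 1) := by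
  intro z hz
  have hslit : 1 + z ∈ Complex.slitPlane := by
    refine Complex.mem_slitPlane_iff.mpr (Or.inl ?_)
    have := (Complex.abs_re_le_norm z).trans_lt (mem_ball_zero_iff.mp hz)
    simp only [Complex.add_re, Complex.one_re]
    linarith [(abs_lt.mp this).1]
  refine DifferentiableAt.differentiableWithinAt (DifferentiableAt.div ?_ ?_ ?_)
  · fun_prop
  · exact (differentiableAt_id.const_add 1).cpow (differentiableAt_const s) hslit
  · simp only [Ne, Complex.cpow_eq_zero_iff, not_and_or]
    exact Or.inl (Complex.slitPlane_ne_zero hslit)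

theorem summable_pow_mul_norm_iteratedDeriv_div_factorial {f : ℂ → ℂ}
    (hf : DifferentiableOn ℂ f (Metric.ball 0 1)) {x : ℝ} (hx0 : 0 ≤ x) (hx1 : x < 1) :
    Summable fun n => x ^ n * ‖iteratedDeriv n f 0 / (n.factorial : ℂ)‖ := by
  obtain ⟨y, hxy, hy1⟩ := exists_between hx1
  have hy0 : 0 < y := hx0.trans_lt hxy
  have htaylor := Complex.hasSum_taylorSeries_on_ball hf (z := y)
    (by simpa [abs_of_pos hy0] using hy1)
  have hbdd : (fun n => ‖(y : ℂ) ^ n * (iteratedDeriv n f 0 / (n.factorial : ℂ))‖) =O[Filter.atTop]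
      fun _ => (1 : ℝ) := by
    refine (htaylor.summable.tendsto_atTop_zero.norm.congr fun n => ?_).isBigO_one ℝ
    simp [div_eq_inv_mul, mul_left_comm]
  refine summable_of_isBigO_nat (summable_geometric_of_lt_one (div_nonneg hx0 hy0.le)
    ((div_lt_one hy0).mpr hxy)) ?_
  refine ((Asymptotics.isBigO_refl (fun n => (x / y) ^ n) _).mul hbdd).congr (fun n => ?_)
    (fun n => mul_one _)
  rw [norm_mul, norm_pow, Complex.norm_real, Real.norm_of_nonneg hy0.le, div_pow, ← mul_assoc,
    div_mul_cancel₀ _ (pow_ne_zero n hy0.ne')]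

lemma norm_cRS (t : ℝ) (K v n : ℕ) :
    ‖cRS t K v n‖ = ((K : ℝ) / v) ^ n
      * ‖iteratedDeriv n (fRS (1/2 - t * Complex.I)) 0 / (n.factorial : ℂ)‖ := by
  rw [cRS, mul_div_assoc, norm_mul, norm_pow, norm_div, Complex.norm_natCast,
    Complex.norm_natCast]

theorem summable_pow_mul_norm_cRS (t : ℝ) {K v : ℕ} (hKv : K ≤ v) :
    Summable fun n => (((K : ℝ) - 1) / K) ^ n * ‖cRS t K v n‖ := by
  set x := ((K : ℝ) - 1) / K * (K / v)
  have hx : 0 ≤ x ∧ x < 1 := by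
    rcases K.eq_zero_or_pos with rfl | hK
    · simp [x]
    have hK1 : (1 : ℝ) ≤ K := by exact_mod_cast hK
    have hKv' : (K : ℝ) ≤ v := by exact_mod_cast hKv
    have hx : x = ((K : ℝ) - 1) / v := by simp only [x]; field_simp
    rw [hx]
    exact ⟨by positivity, (div_lt_one (by linarith)).mpr (by linarith)⟩
  refine (summable_pow_mul_norm_iteratedDeriv_div_factorial
    (differentiableOn_fRS (1/2 - t * Complex.I)) hx.1 hx.2).congr fun n => ?_
  rw [norm_cRS, ← mul_assoc, ← mul_pow]

theorem norm_tsum_cRS_mul_quadSum_le (t : ℝ) {K v : ℕ} (hKv : K ≤ v) (m : ℕ) (a b : ℝ) :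
    ‖∑' j : ℕ, cRS t K v (m + j) * quadSum K (m + j) a b‖
      ≤ (∑' j : ℕ, (((K : ℝ) - 1) / K) ^ (m + j) * ‖cRS t K v (m + j)‖) * quadSumMax K a b := by
  have hsum : Summable fun j => (((K : ℝ) - 1) / K) ^ (m + j) * ‖cRS t K v (m + j)‖ :=
    ((summable_nat_add_iff m).mpr (summable_pow_mul_norm_cRS t hKv)).congr fun j => by
      rw [add_comm]
  refine tsum_of_norm_bounded (hsum.hasSum.mul_right _) fun j => ?_
  have := mul_le_mul_of_nonneg_left (norm_quadSum_le K (m + j) a b)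
    (norm_nonneg (cRS t K v (m + j)))
  rw [norm_mul]
  linarith

lemma norm_exp_I_mul_ofReal_div_mul (t y x : ℝ) (z : ℂ) :
    ‖Complex.exp (Complex.I * t * (y : ℂ)) / (x : ℂ) * z‖ = ‖z‖ / |x| := by
  rw [norm_mul, norm_div, Complex.norm_real, Real.norm_eq_abs, show Complex.I * t * (y : ℂ) =
    ((t * y : ℝ) : ℂ) * Complex.I by push_cast; ring, Complex.norm_exp_ofReal_mul_I,
    one_div_mul_eq_div]

theorem stmt_14_general (t : ℝ) (N : ℕ) (u₀ : ℝ) (hu₀ : 1 < u₀)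
    (v K : ℕ → ℕ) (R : ℕ)
    (hKr : ∀ r < R, K r = ⌈(v r : ℝ)/u₀⌉₊)
    (hKR : K R = min ⌈(v R : ℝ)/u₀⌉₊ (N + 1 - v R))
    (J : ℕ) :
    ‖∑ r ∈ Finset.range (R+1),
        (Complex.exp (Complex.I * (t:ℂ) * (Real.log (v r : ℝ) : ℂ))
            / ((Real.sqrt (v r : ℝ) : ℝ) : ℂ))
          * ∑' j : ℕ, cRS t (K r) (v r) (J+1+j)
              * quadSum (K r) (J+1+j) (t/(2*π*(v r : ℝ))) (-t/(4*π*(v r : ℝ)^2))‖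
      ≤ (⨆ r ∈ Finset.range (R+1),
            ∑' j : ℕ, (((K r : ℝ) - 1)/(K r : ℝ))^(J+1+j)
              * ‖cRS t (K r) (v r) (J+1+j)‖)
        * ∑ r ∈ Finset.range (R+1),
            quadSumMax (K r) (t/(2*π*(v r : ℝ))) (-t/(4*π*(v r : ℝ)^2))
              / Real.sqrt (v r : ℝ) := by
  have hKv : ∀ r ∈ range (R + 1), K r ≤ v r := by
    intro r hr
    have hceil : ⌈(v r : ℝ) / u₀⌉₊ ≤ v r :=
      Nat.ceil_le.mpr (div_le_self (Nat.cast_nonneg _) hu₀.le)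
    rcases (Nat.lt_succ_iff.mp (mem_range.mp hr)).lt_or_eq with h | rfl
    · exact (hKr r h).trans_le hceil
    · exact hKR ▸ (min_le_left _ _).trans hceil
  refine (norm_sum_le _ _).trans ?_
  rw [mul_sum]
  refine sum_le_sum fun r hr => ?_
  rw [norm_exp_I_mul_ofReal_div_mul, abs_of_nonneg (Real.sqrt_nonneg _), ← mul_div_assoc]
  gcongr
  refine (norm_tsum_cRS_mul_quadSum_le t (hKv r hr) (J + 1) _ _).trans ?_
  gcongr
  · exact quadSumMax_nonneg _ _ _
  · exact le_ciSup₂_of_mem (fun r => ∑' j : ℕ, (((K r : ℝ) - 1) / (K r : ℝ)) ^ (J + 1 + j)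
      * ‖cRS t (K r) (v r) (J + 1 + j)‖) hr

/-- Let `t > 2π`, `N = ⌊√(t/2π)⌋`, `v₀ ≤ N+1` a positive integer, `u₀ > 1` real;
`K_r = ⌈v_r/u₀⌉`, `v_{r+1} = v_r + K_r` for `0 ≤ r < R`, where `R` is the largest
integer with `v_R < N+1`, and `K_R = min(⌈v_R/u₀⌉, N+1−v_R)`. With
`a_r = t/(2πv_r)`, `b_r = −t/(4πv_r²)`, `c_r(j) = (K_r/v_r)^j f_{s*}^{(j)}(0)/j!`
and `ε_J(t) = Σ_{r=0}^R (e^{it log v_r}/√v_r) Σ_{j>J} c_r(j) F(K_r, j; a_r, b_r)`,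
one has `|ε_J(t)| ≤ c_max(J,t) · M_max(t)` where
`c_max(J,t) = max_{0≤r≤R} Σ_{j>J} ((K_r−1)/K_r)^j |c_r(j)|` and
`M_max(t) = Σ_{r=0}^R F_max(K_r; a_r, b_r)/√v_r`. -/
theorem stmt_14 (t : ℝ) (ht : 2*π < t)
    (N : ℕ) (hN : N = ⌊Real.sqrt (t/(2*π))⌋₊)
    (v₀ : ℕ) (hv₀pos : 0 < v₀) (hv₀N : v₀ ≤ N + 1)
    (u₀ : ℝ) (hu₀ : 1 < u₀)
    (v K : ℕ → ℕ) (R : ℕ)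
    (hv0 : v 0 = v₀)
    (hKr : ∀ r < R, K r = ⌈(v r : ℝ)/u₀⌉₊)
    (hvr : ∀ r < R, v (r+1) = v r + K r)
    (hvR : v R < N + 1)
    (hRmax : N + 1 ≤ v R + ⌈(v R : ℝ)/u₀⌉₊)
    (hKR : K R = min ⌈(v R : ℝ)/u₀⌉₊ (N + 1 - v R))
    (J : ℕ) :
    ‖∑ r ∈ Finset.range (R+1),
        (Complex.exp (Complex.I * (t:ℂ) * (Real.log (v r : ℝ) : ℂ))
            / ((Real.sqrt (v r : ℝ) : ℝ) : ℂ))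
          * ∑' j : ℕ, cRS t (K r) (v r) (J+1+j)
              * quadSum (K r) (J+1+j) (t/(2*π*(v r : ℝ))) (-t/(4*π*(v r : ℝ)^2))‖
      ≤ (⨆ r ∈ Finset.range (R+1),
            ∑' j : ℕ, (((K r : ℝ) - 1)/(K r : ℝ))^(J+1+j)
              * ‖cRS t (K r) (v r) (J+1+j)‖)
        * ∑ r ∈ Finset.range (R+1),
            quadSumMax (K r) (t/(2*π*(v r : ℝ))) (-t/(4*π*(v r : ℝ)^2))
              / Real.sqrt (v r : ℝ) :=
  stmt_14_general t N u₀ hu₀ v K R hKr hKR J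
end
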